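/- Under the assumptions that W ∈ L²([0,1]²) is nonnegative with esssup_x ∫ W(x,y) dy and esssup_y ∫ W(x,y) dx finite, and ω ∈ L²([0,1]), for every g ∈ L²([0,1]) the initial value problem du/dt = ω + K∫₀¹ W(·,y) sin(u(y) − u(·)) dy, u(0) = g, has a unique solution u ∈ C¹(ℝ, L²([0,1])), depending continuously on g. -/

import Mathlib

open MeasureTheory Real Filter Topology
open Set
open scoped ENNReal NNReal

set_option linter.unusedSectionVars false
set_option maxHeartbeats 1000000

section ODE

variable {E : Type*} [NormedAddCommGroup E] [NormedSpace ℝ E] [CompleteSpace E]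

/-- Gronwall estimate for two global solutions of an autonomous Lipschitz ODE. -/
lemma global_gronwall_fwd (F : E → E) (c : NNReal) (hF : LipschitzWith c F)
    (w z : ℝ → E) (hw : ∀ s, HasDerivAt w (F (w s)) s)
    (hz : ∀ s, HasDerivAt z (F (z s)) s) (s : ℝ) (hs : 0 ≤ s) :
    dist (w s) (z s) ≤ dist (w 0) (z 0) * Real.exp (c * s) := by
  have := dist_le_of_trajectories_ODE (v := fun _ x => F x) (K := c)
    (f := w) (g := z) (a := 0) (b := s) (δ := dist (w 0) (z 0))
    (fun _ => hF)
    (fun r _ => (hw r).continuousAt.continuousWithinAt)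
    (fun r _ => (hw r).hasDerivWithinAt)
    (fun r _ => (hz r).continuousAt.continuousWithinAt)
    (fun r _ => (hz r).hasDerivWithinAt)
    le_rfl s (by constructor <;> simp [hs])
  simpa using this

lemma global_gronwall (F : E → E) (c : NNReal) (hF : LipschitzWith c F)
    (u v : ℝ → E) (hu : ∀ t, HasDerivAt u (F (u t)) t)
    (hv : ∀ t, HasDerivAt v (F (v t)) t) (t : ℝ) :
    dist (u t) (v t) ≤ dist (u 0) (v 0) * Real.exp (c * |t|) := by
  rcases le_total 0 t with ht | ht
  · rw [abs_of_nonneg ht]; exact global_gronwall_fwd F c hF u v hu hv t ht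
  · -- time reversal
    set G : E → E := fun x => -F x with hG
    have hGlip : LipschitzWith c G := by
      intro x y
      simp only [hG, edist_neg_neg]
      exact hF x y
    have hw : ∀ s, HasDerivAt (fun r => u (-r)) (G (u (-s))) s := by
      intro s
      have h1 : HasDerivAt (fun r : ℝ => -r) (-1) s := (hasDerivAt_id s).neg
      have := (hu (-s)).scomp s h1
      simpa [hG, neg_one_smul, Function.comp_def] using this
    have hz : ∀ s, HasDerivAt (fun r => v (-r)) (G (v (-s))) s := by
      intro s
      have h1 : HasDerivAt (fun r : ℝ => -r) (-1) s := (hasDerivAt_id s).neg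
      have := (hv (-s)).scomp s h1
      simpa [hG, neg_one_smul, Function.comp_def] using this
    have := global_gronwall_fwd G c hGlip (fun r => u (-r)) (fun r => v (-r)) hw hz (-t) (by linarith)
    simpa [abs_of_nonpos ht] using this

/-- Global uniqueness. -/
lemma global_unique (F : E → E) (c : NNReal) (hF : LipschitzWith c F)
    (u v : ℝ → E) (hu : ∀ t, HasDerivAt u (F (u t)) t)
    (hv : ∀ t, HasDerivAt v (F (v t)) t) (h0 : u 0 = v 0) : u = v := by
  funext t
  have := global_gronwall F c hF u v hu hv t
  rw [h0, dist_self, zero_mul] at this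
  exact dist_le_zero.mp this

/-- Global existence for a bounded Lipschitz autonomous vector field. -/
lemma global_exists (F : E → E) (c : NNReal) (hF : LipschitzWith c F)
    (M : ℝ) (hM : ∀ x, ‖F x‖ ≤ M) (g : E) :
    ∃ u : ℝ → E, u 0 = g ∧ ∀ t, HasDerivAt u (F (u t)) t := by
  have hM0 : 0 ≤ M := le_trans (norm_nonneg _) (hM g)
  have H : ∀ n : ℕ, ∃ f : ℝ → E, f 0 = g ∧
      ∀ t ∈ Icc (-(n + 1 : ℝ)) (n + 1), HasDerivWithinAt f (F (f t)) (Icc (-(n + 1 : ℝ)) (n + 1)) t := by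
    intro n
    have ht0 : (0:ℝ) ∈ Icc (-(n + 1 : ℝ)) (n + 1) := by
      have : (0:ℝ) ≤ n + 1 := by positivity
      constructor <;> linarith
    have hpl : IsPicardLindelof (fun _ x => F x) (⟨0, ht0⟩ : Icc (-(n + 1 : ℝ)) (n + 1)) g
        (M.toNNReal * (n + 1)) 0 M.toNNReal c := by
      apply IsPicardLindelof.of_time_independent
      · exact fun x _ => (hM x).trans (Real.le_coe_toNNReal M)
      · exact hF.lipschitzOnWith
      · have : max ((n + 1 : ℝ) - 0) (0 - -(n + 1)) = (n + 1 : ℝ) := by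
          rw [sub_zero, zero_sub, neg_neg, max_self]
        simp only [this]
        push_cast
        simp
    obtain ⟨α, hα0, hα⟩ := hpl.exists_eq_forall_mem_Icc_hasDerivWithinAt₀
    exact ⟨α, hα0, hα⟩
  choose sol h0 hd using H
  -- interior derivative
  have hdi : ∀ n : ℕ, ∀ t ∈ Ioo (-(n + 1 : ℝ)) (n + 1), HasDerivAt (sol n) (F (sol n t)) t := by
    intro n t ht
    exact (hd n t (Ioo_subset_Icc_self ht)).hasDerivAt (Icc_mem_nhds ht.1 ht.2)
  have hcont : ∀ n : ℕ, ContinuousOn (sol n) (Icc (-(n + 1 : ℝ)) (n + 1)) :=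
    fun n t ht => (hd n t ht).continuousWithinAt
  -- consistency
  have hcons : ∀ n m : ℕ, n ≤ m → Set.EqOn (sol n) (sol m) (Icc (-(n + 1 : ℝ)) (n + 1)) := by
    intro n m hnm
    have hsub : Icc (-(n + 1 : ℝ)) (n + 1) ⊆ Icc (-(m + 1 : ℝ)) (m + 1) := by
      apply Icc_subset_Icc <;> [skip; skip] <;>
        · have : (n : ℝ) ≤ m := Nat.cast_le.mpr hnm
          linarith
    have hsub' : Ioo (-(n + 1 : ℝ)) (n + 1) ⊆ Ioo (-(m + 1 : ℝ)) (m + 1) := by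
      apply Ioo_subset_Ioo <;>
        · have : (n : ℝ) ≤ m := Nat.cast_le.mpr hnm
          linarith
    refine ODE_solution_unique_of_mem_Icc (v := fun _ x => F x) (s := fun _ => Set.univ)
      (t₀ := 0) (fun _ _ => hF.lipschitzOnWith) ?_ (hcont n) ?_ (fun _ _ => trivial)
      ((hcont m).mono hsub) ?_ (fun _ _ => trivial) ?_
    · constructor
      · have : (0:ℝ) < n + 1 := by positivity
        linarith
      · positivity
    · exact fun t ht => hdi n t ht
    · exact fun t ht => hdi m t (hsub' ht)
    · rw [h0 n, h0 m]
  set u : ℝ → E := fun t => sol ⌈|t|⌉₊ t with hu_def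
  have hmem : ∀ (t : ℝ) (m : ℕ), ⌈|t|⌉₊ ≤ m → t ∈ Icc (-(m + 1 : ℝ)) (m + 1) := by
    intro t m hm
    have h1 : |t| ≤ (m : ℝ) + 1 := by
      calc |t| ≤ (⌈|t|⌉₊ : ℝ) := Nat.le_ceil _
      _ ≤ (m : ℝ) := Nat.cast_le.mpr hm
      _ ≤ m + 1 := by linarith
    have := abs_le.mp h1
    exact ⟨this.1, this.2⟩
  have hueq : ∀ (t : ℝ) (m : ℕ), ⌈|t|⌉₊ ≤ m → u t = sol m t := by
    intro t m hm
    exact hcons ⌈|t|⌉₊ m hm (hmem t ⌈|t|⌉₊ le_rfl)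
  refine ⟨u, ?_, ?_⟩
  · have : u 0 = sol 0 0 := by simp [hu_def]
    rw [this, h0 0]
  · intro t
    set n : ℕ := ⌈|t|⌉₊ with hn
    have hloc : u =ᶠ[nhds t] sol (n + 1) := by
      have hball : Metric.ball t 1 ∈ nhds t := Metric.ball_mem_nhds t one_pos
      filter_upwards [hball] with t' ht'
      apply hueq
      have : |t'| ≤ (n : ℝ) + 1 := by
        have h1 : |t' - t| < 1 := by simpa [Real.dist_eq] using ht'
        have h2 : |t| ≤ (n : ℝ) := Nat.le_ceil _
        calc |t'| ≤ |t' - t| + |t| := by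
              simpa using abs_add_le (t' - t) t
        _ ≤ 1 + (n : ℝ) := by
              have := Nat.le_ceil |t|
              linarith [this]
        _ = (n : ℝ) + 1 := by ring
      calc ⌈|t'|⌉₊ ≤ ⌈((n : ℝ) + 1)⌉₊ := Nat.ceil_le_ceil this
      _ = n + 1 := by
            rw [show ((n : ℝ) + 1) = ((n + 1 : ℕ) : ℝ) by push_cast; ring, Nat.ceil_natCast]
    have hder : HasDerivAt (sol (n + 1)) (F (sol (n + 1) t)) t := by
      apply hdi (n + 1)
      have h1 : |t| ≤ (n : ℝ) := Nat.le_ceil _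
      have h2 : (n : ℝ) < (n + 1 : ℕ) + 1 := by push_cast; linarith
      constructor
      · have := (abs_le.mp h1).1; push_cast; linarith
      · have := (abs_le.mp h1).2; push_cast; linarith
    have heq : u t = sol (n + 1) t := hueq t (n + 1) (by omega)
    rw [show F (u t) = F (sol (n+1) t) by rw [heq]]
    exact hder.congr_of_eventuallyEq hloc

end ODE

noncomputable section


/-- The measure on `[0,1]`. -/
def μI : Measure ℝ := volume.restrict (Set.Icc (0 : ℝ) 1)

/-- `u : ℝ → L²([0,1])` is a C¹ solution of the continuum-limit Kuramoto
equation with kernel `W`, frequency `ω` and coupling `K`. -/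
def IsCLSolution (W : ℝ → ℝ → ℝ) (ω : ℝ → ℝ) (K : ℝ)
    (u : ℝ → Lp ℝ 2 μI) : Prop :=
  ∃ d : ℝ → Lp ℝ 2 μI, Continuous u ∧ Continuous d ∧
    ∀ t : ℝ, HasDerivAt u (d t) t ∧
      (d t : ℝ → ℝ) =ᵐ[μI]
        fun x => ω x + K * ∫ y, W x y * Real.sin ((u t : ℝ → ℝ) y - (u t : ℝ → ℝ) x) ∂μI

instance : IsFiniteMeasure μI := by
  constructor
  rw [μI, Measure.restrict_apply MeasurableSet.univ, Set.univ_inter]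
  simp

lemma μI_univ : μI Set.univ = 1 := by
  rw [μI, Measure.restrict_apply MeasurableSet.univ, Set.univ_inter]
  simp

lemma μI_ne_zero : μI ≠ 0 := by
  intro h
  have := μI_univ
  rw [h] at this
  simp at this

lemma sin_lip (a b : ℝ) : |Real.sin a - Real.sin b| ≤ |a - b| := by
  rw [Real.sin_sub_sin]
  calc |2 * Real.sin ((a - b) / 2) * Real.cos ((a + b) / 2)|
      = 2 * |Real.sin ((a - b) / 2)| * |Real.cos ((a + b) / 2)| := by
        rw [abs_mul, abs_mul]; norm_num
    _ ≤ 2 * |(a - b) / 2| * 1 := by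
        apply mul_le_mul
        · exact mul_le_mul_of_nonneg_left (Real.abs_sin_le_abs) (by norm_num)
        · exact Real.abs_cos_le_one _
        · positivity
        · positivity
    _ = |a - b| := by rw [abs_div, abs_two]; ring

lemma rpow_two_half (a : ℝ≥0∞) : (a ^ (2:ℝ)) ^ ((2:ℝ)⁻¹) = a := by
  rw [← ENNReal.rpow_mul]; norm_num

lemma rpow_half_two (a : ℝ≥0∞) : (a ^ ((2:ℝ)⁻¹)) ^ (2:ℝ) = a := by
  rw [← ENNReal.rpow_mul]; norm_num

lemma eLpNorm_two_eq (f : ℝ → ℝ) :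
    eLpNorm f 2 μI = (∫⁻ x, (‖f x‖₊ : ℝ≥0∞) ^ (2:ℝ) ∂μI) ^ ((2:ℝ)⁻¹) := by
  rw [eLpNorm_eq_lintegral_rpow_enorm_toReal (by norm_num) (by norm_num)]
  norm_num
  rfl

section Kuramoto

variable (W : ℝ → ℝ → ℝ) (ω : ℝ → ℝ) (K C₂ : ℝ)

/-- The raw right-hand side. -/
def Fraw (u : Lp ℝ 2 μI) : ℝ → ℝ :=
  fun x => ω x + K * ∫ y, W x y * Real.sin ((u : ℝ → ℝ) y - (u : ℝ → ℝ) x) ∂μI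

variable (hK : 0 < K) (hWmeas : Measurable (Function.uncurry W))
  (hWnn : ∀ x y, 0 ≤ W x y)
  (hWL2 : MemLp (Function.uncurry W) 2 (μI.prod μI))
  (hC₂ : ∀ᵐ x ∂μI, ∫ y, W x y ∂μI ≤ C₂)
  (hω : MemLp ω 2 μI)

include hWmeas in
lemma integrand_meas (u : Lp ℝ 2 μI) :
    Measurable (fun p : ℝ × ℝ => W p.1 p.2 * Real.sin ((u : ℝ → ℝ) p.2 - (u : ℝ → ℝ) p.1)) := by
  have hum : Measurable (u : ℝ → ℝ) := (Lp.stronglyMeasurable u).measurable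
  exact hWmeas.mul (((hum.comp measurable_snd).sub (hum.comp measurable_fst)).sin)

include hWmeas hWnn hWL2 in
lemma integrand_int (u : Lp ℝ 2 μI) :
    Integrable (fun p : ℝ × ℝ => W p.1 p.2 * Real.sin ((u : ℝ → ℝ) p.2 - (u : ℝ → ℝ) p.1))
      (μI.prod μI) := by
  have hWint : Integrable (Function.uncurry W) (μI.prod μI) := hWL2.integrable (by norm_num)
  refine hWint.mono' (integrand_meas W hWmeas u).aestronglyMeasurable ?_
  filter_upwards with p
  rw [Function.uncurry_apply_pair, Real.norm_eq_abs, abs_mul, abs_of_nonneg (hWnn _ _)]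
  exact mul_le_of_le_one_right (hWnn _ _) (Real.abs_sin_le_one _)

include hWmeas in
lemma intF_asm (u : Lp ℝ 2 μI) : AEStronglyMeasurable
    (fun x => K * ∫ y, W x y * Real.sin ((u : ℝ → ℝ) y - (u : ℝ → ℝ) x) ∂μI) μI :=
  (((integrand_meas W hWmeas u).stronglyMeasurable.integral_prod_right').const_mul
    K).aestronglyMeasurable

include hK hWmeas hWnn hWL2 hC₂ in
lemma Fbound_ae (u : Lp ℝ 2 μI) :
    ∀ᵐ x ∂μI, ‖K * ∫ y, W x y * Real.sin ((u : ℝ → ℝ) y - (u : ℝ → ℝ) x) ∂μI‖ ≤ K * C₂ := by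
  have hWint : Integrable (Function.uncurry W) (μI.prod μI) := hWL2.integrable (by norm_num)
  have hgi := integrand_int W hWmeas hWnn hWL2 u
  filter_upwards [hgi.prod_right_ae, hWint.prod_right_ae, hC₂] with x h1 h2 h3
  rw [Real.norm_eq_abs, abs_mul, abs_of_pos hK]
  refine mul_le_mul_of_nonneg_left ?_ hK.le
  calc |∫ y, W x y * Real.sin ((u : ℝ → ℝ) y - (u : ℝ → ℝ) x) ∂μI|
      ≤ ∫ y, |W x y * Real.sin ((u : ℝ → ℝ) y - (u : ℝ → ℝ) x)| ∂μI := by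
        simpa only [Real.norm_eq_abs] using
          norm_integral_le_integral_norm (μ := μI)
            (fun y => W x y * Real.sin ((u : ℝ → ℝ) y - (u : ℝ → ℝ) x))
    _ ≤ ∫ y, W x y ∂μI := by
        refine integral_mono h1.abs h2 fun y => ?_
        rw [abs_mul, abs_of_nonneg (hWnn _ _)]
        exact mul_le_of_le_one_right (hWnn _ _) (Real.abs_sin_le_one _)
    _ ≤ C₂ := h3

include hK hWmeas hWnn hWL2 hC₂ hω in
lemma memF (u : Lp ℝ 2 μI) : MemLp (Fraw W ω K u) 2 μI :=
  hω.add (MemLp.of_bound (intF_asm W K hWmeas u) (K * C₂)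
    (Fbound_ae W K C₂ hK hWmeas hWnn hWL2 hC₂ u))

include hK hWmeas hWnn hWL2 hC₂ hω in
lemma eLpNorm_F_le (u : Lp ℝ 2 μI) :
    eLpNorm (Fraw W ω K u) 2 μI ≤ eLpNorm ω 2 μI + ENNReal.ofReal (K * C₂) := by
  refine le_trans (eLpNorm_add_le hω.aestronglyMeasurable (intF_asm W K hWmeas u)
    (by norm_num)) ?_
  gcongr
  refine le_trans (eLpNorm_le_of_ae_bound (Fbound_ae W K C₂ hK hWmeas hWnn hWL2 hC₂ u)) ?_
  rw [μI_univ, ENNReal.one_rpow, one_mul]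

include hK hWmeas hWnn hWL2 hC₂ in
lemma lipF (u v : Lp ℝ 2 μI) :
    eLpNorm (Fraw W ω K u - Fraw W ω K v) 2 μI ≤
      ENNReal.ofReal K * (eLpNorm (Function.uncurry W) 2 (μI.prod μI) + ENNReal.ofReal C₂) *
        eLpNorm ((u : ℝ → ℝ) - (v : ℝ → ℝ)) 2 μI := by
  have hWint : Integrable (Function.uncurry W) (μI.prod μI) := hWL2.integrable (by norm_num)
  have hum : Measurable (u : ℝ → ℝ) := (Lp.stronglyMeasurable u).measurable
  have hvm : Measurable (v : ℝ → ℝ) := (Lp.stronglyMeasurable v).measurable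
  set en : ℝ → ℝ≥0∞ := fun x => (‖(u : ℝ → ℝ) x - (v : ℝ → ℝ) x‖₊ : ℝ≥0∞) with hen_def
  set eW : ℝ → ℝ → ℝ≥0∞ := fun x y => ENNReal.ofReal (W x y) with heW_def
  have hen : Measurable en := ((hum.sub hvm).nnnorm).coe_nnreal_ennreal
  have heW : Measurable (fun p : ℝ × ℝ => eW p.1 p.2) := by
    have : Measurable (fun p : ℝ × ℝ => W p.1 p.2) := hWmeas
    exact this.ennreal_ofReal
  have hsliceW : ∀ x, Measurable (fun y => eW x y) := fun x => heW.comp measurable_prodMk_left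
  set A : ℝ → ℝ≥0∞ := fun x => ∫⁻ y, eW x y * en y ∂μI with hA_def
  set B : ℝ → ℝ≥0∞ := fun x => (∫⁻ y, eW x y ∂μI) * en x with hB_def
  set Nw : ℝ≥0∞ := (∫⁻ x, en x ^ (2:ℝ) ∂μI) ^ ((2:ℝ)⁻¹) with hNw_def
  set B₀ : ℝ≥0∞ := eLpNorm (Function.uncurry W) 2 (μI.prod μI) with hB₀_def
  set Kₑ : ℝ≥0∞ := ENNReal.ofReal K with hKe_def
  have hA : Measurable A :=
    Measurable.lintegral_prod_right (f := fun x y => eW x y * en y)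
      (heW.mul (hen.comp measurable_snd))
  have hB : Measurable B := (Measurable.lintegral_prod_right (f := fun x y => eW x y) heW).mul hen
  -- pointwise key bound
  have key : ∀ᵐ x ∂μI,
      (‖(Fraw W ω K u - Fraw W ω K v) x‖₊ : ℝ≥0∞) ≤ Kₑ * (A x + B x) := by
    filter_upwards [(integrand_int W hWmeas hWnn hWL2 u).prod_right_ae,
      (integrand_int W hWmeas hWnn hWL2 v).prod_right_ae] with x h1 h2
    have hsub : (Fraw W ω K u - Fraw W ω K v) x =
        K * ∫ y, (W x y * Real.sin ((u : ℝ → ℝ) y - (u : ℝ → ℝ) x)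
          - W x y * Real.sin ((v : ℝ → ℝ) y - (v : ℝ → ℝ) x)) ∂μI := by
      rw [Pi.sub_apply, integral_sub h1 h2, Fraw, Fraw]
      ring
    rw [hsub, ← enorm_eq_nnnorm, Real.enorm_eq_ofReal_abs, abs_mul, abs_of_pos hK, ENNReal.ofReal_mul hK.le]
    rw [hKe_def]
    gcongr
    calc ENNReal.ofReal |∫ y, (W x y * Real.sin ((u : ℝ → ℝ) y - (u : ℝ → ℝ) x)
          - W x y * Real.sin ((v : ℝ → ℝ) y - (v : ℝ → ℝ) x)) ∂μI|
        = (‖∫ y, (W x y * Real.sin ((u : ℝ → ℝ) y - (u : ℝ → ℝ) x)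
          - W x y * Real.sin ((v : ℝ → ℝ) y - (v : ℝ → ℝ) x)) ∂μI‖₊ : ℝ≥0∞) := by
          rw [← enorm_eq_nnnorm, Real.enorm_eq_ofReal_abs]
      _ ≤ ∫⁻ y, (‖W x y * Real.sin ((u : ℝ → ℝ) y - (u : ℝ → ℝ) x)
          - W x y * Real.sin ((v : ℝ → ℝ) y - (v : ℝ → ℝ) x)‖₊ : ℝ≥0∞) ∂μI :=
          enorm_integral_le_lintegral_enorm _
      _ ≤ ∫⁻ y, eW x y * (en y + en x) ∂μI := by
          refine lintegral_mono fun y => ?_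
          rw [← enorm_eq_nnnorm, Real.enorm_eq_ofReal_abs]
          have hre : |W x y * Real.sin ((u : ℝ → ℝ) y - (u : ℝ → ℝ) x)
              - W x y * Real.sin ((v : ℝ → ℝ) y - (v : ℝ → ℝ) x)|
              ≤ W x y * (|(u : ℝ → ℝ) y - (v : ℝ → ℝ) y| + |(u : ℝ → ℝ) x - (v : ℝ → ℝ) x|) := by
            rw [← mul_sub, abs_mul, abs_of_nonneg (hWnn _ _)]
            refine mul_le_mul_of_nonneg_left ?_ (hWnn _ _)
            refine le_trans (sin_lip _ _) ?_
            have : ((u : ℝ → ℝ) y - (u : ℝ → ℝ) x) - ((v : ℝ → ℝ) y - (v : ℝ → ℝ) x)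
                = ((u : ℝ → ℝ) y - (v : ℝ → ℝ) y) - ((u : ℝ → ℝ) x - (v : ℝ → ℝ) x) := by ring
            rw [this]
            exact abs_sub _ _
          refine le_trans (ENNReal.ofReal_le_ofReal hre) ?_
          rw [ENNReal.ofReal_mul (hWnn _ _), ENNReal.ofReal_add (abs_nonneg _) (abs_nonneg _)]
          simp only [hen_def, heW_def, ← enorm_eq_nnnorm, Real.enorm_eq_ofReal_abs]
          exact le_rfl
      _ = A x + B x := by
          rw [hA_def, hB_def]
          simp only [mul_add]
          rw [lintegral_add_left (f := fun y => eW x y * en y) ((hsliceW x).mul hen)]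
          congr 1
          exact lintegral_mul_const _ (hsliceW x)
  -- bound for the A part (Cauchy–Schwarz + Fubini)
  have hA2 : (∫⁻ x, A x ^ (2:ℝ) ∂μI) ^ ((2:ℝ)⁻¹) ≤ B₀ * Nw := by
    have hCS : ∀ x, A x ≤ (∫⁻ y, eW x y ^ (2:ℝ) ∂μI) ^ ((2:ℝ)⁻¹) * Nw := by
      intro x
      have conj : Real.HolderConjugate 2 2 := Real.HolderConjugate.two_two
      have := ENNReal.lintegral_mul_le_Lp_mul_Lq μI conj
        (hsliceW x).aemeasurable hen.aemeasurable
      simpa [hA_def, hNw_def, one_div] using this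
    calc (∫⁻ x, A x ^ (2:ℝ) ∂μI) ^ ((2:ℝ)⁻¹)
        ≤ (∫⁻ x, ((∫⁻ y, eW x y ^ (2:ℝ) ∂μI) ^ ((2:ℝ)⁻¹) * Nw) ^ (2:ℝ) ∂μI) ^ ((2:ℝ)⁻¹) := by
          gcongr with x
          exact hCS x
      _ = ((∫⁻ x, (∫⁻ y, eW x y ^ (2:ℝ) ∂μI) ∂μI) * Nw ^ (2:ℝ)) ^ ((2:ℝ)⁻¹) := by
          congr 1
          have : ∀ x : ℝ, ((∫⁻ y, eW x y ^ (2:ℝ) ∂μI) ^ ((2:ℝ)⁻¹) * Nw) ^ (2:ℝ)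
              = (∫⁻ y, eW x y ^ (2:ℝ) ∂μI) * Nw ^ (2:ℝ) := by
            intro x
            rw [ENNReal.mul_rpow_of_nonneg _ _ (by norm_num : (0:ℝ) ≤ 2), rpow_half_two]
          simp_rw [this]
          exact lintegral_mul_const _
            (Measurable.lintegral_prod_right (f := fun x y => eW x y ^ (2:ℝ))
              (heW.pow_const _))
      _ = (B₀ ^ (2:ℝ) * Nw ^ (2:ℝ)) ^ ((2:ℝ)⁻¹) := by
          congr 2
          have hfb : (∫⁻ p : ℝ × ℝ, eW p.1 p.2 ^ (2:ℝ) ∂(μI.prod μI))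
              = ∫⁻ x, (∫⁻ y, eW x y ^ (2:ℝ) ∂μI) ∂μI :=
            lintegral_prod _ (heW.pow_const _).aemeasurable
          rw [← hfb, hB₀_def, eLpNorm_eq_lintegral_rpow_enorm_toReal (by norm_num) (by norm_num),
            ← ENNReal.rpow_mul]
          norm_num
          refine lintegral_congr fun p => ?_
          congr 1
          show ENNReal.ofReal (W p.1 p.2) = ((‖Function.uncurry W p‖₊ : ℝ≥0∞))
          rw [← Real.enorm_eq_ofReal (hWnn _ _)]
          rfl
      _ = B₀ * Nw := by
          rw [← ENNReal.mul_rpow_of_nonneg B₀ Nw (by norm_num : (0:ℝ) ≤ 2), rpow_two_half]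
  -- bound for the B part
  have haeW : ∀ᵐ x ∂μI, (∫⁻ y, eW x y ∂μI) ≤ ENNReal.ofReal C₂ := by
    filter_upwards [hWint.prod_right_ae, hC₂] with x h1 h2
    have h1' : Integrable (fun y => W x y) μI := h1
    calc ∫⁻ y, eW x y ∂μI
        = ENNReal.ofReal (∫ y, W x y ∂μI) :=
          (ofReal_integral_eq_lintegral_ofReal h1' (Eventually.of_forall fun y => hWnn x y)).symm
      _ ≤ ENNReal.ofReal C₂ := ENNReal.ofReal_le_ofReal h2
  have hB2 : (∫⁻ x, B x ^ (2:ℝ) ∂μI) ^ ((2:ℝ)⁻¹) ≤ ENNReal.ofReal C₂ * Nw := by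
    calc (∫⁻ x, B x ^ (2:ℝ) ∂μI) ^ ((2:ℝ)⁻¹)
        ≤ (∫⁻ x, (ENNReal.ofReal C₂ * en x) ^ (2:ℝ) ∂μI) ^ ((2:ℝ)⁻¹) := by
          refine ENNReal.rpow_le_rpow (lintegral_mono_ae ?_) (by norm_num)
          filter_upwards [haeW] with x hx
          refine ENNReal.rpow_le_rpow ?_ (by norm_num)
          rw [hB_def]
          exact mul_le_mul_left hx _
      _ = ENNReal.ofReal C₂ * Nw := by
          have : ∀ x : ℝ, (ENNReal.ofReal C₂ * en x) ^ (2:ℝ)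
              = ENNReal.ofReal C₂ ^ (2:ℝ) * en x ^ (2:ℝ) := fun x =>
            ENNReal.mul_rpow_of_nonneg _ _ (by norm_num : (0:ℝ) ≤ 2)
          simp_rw [this]
          rw [lintegral_const_mul' _ _ (by
            exact ENNReal.rpow_ne_top_of_nonneg (by norm_num) ENNReal.ofReal_ne_top),
            ENNReal.mul_rpow_of_nonneg _ _ (by norm_num : (0:ℝ) ≤ 2⁻¹), rpow_two_half,
            hNw_def]
  -- assemble
  calc eLpNorm (Fraw W ω K u - Fraw W ω K v) 2 μI
      = (∫⁻ x, (‖(Fraw W ω K u - Fraw W ω K v) x‖₊ : ℝ≥0∞) ^ (2:ℝ) ∂μI) ^ ((2:ℝ)⁻¹) :=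
        eLpNorm_two_eq _
    _ ≤ (∫⁻ x, (Kₑ * (A x + B x)) ^ (2:ℝ) ∂μI) ^ ((2:ℝ)⁻¹) := by
        refine ENNReal.rpow_le_rpow (lintegral_mono_ae ?_) (by norm_num)
        filter_upwards [key] with x hx
        exact ENNReal.rpow_le_rpow hx (by norm_num)
    _ = Kₑ * (∫⁻ x, (A x + B x) ^ (2:ℝ) ∂μI) ^ ((2:ℝ)⁻¹) := by
        have : ∀ x : ℝ, (Kₑ * (A x + B x)) ^ (2:ℝ) = Kₑ ^ (2:ℝ) * (A x + B x) ^ (2:ℝ) :=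
          fun x => ENNReal.mul_rpow_of_nonneg _ _ (by norm_num : (0:ℝ) ≤ 2)
        simp_rw [this]
        rw [lintegral_const_mul' _ _ (by
          exact ENNReal.rpow_ne_top_of_nonneg (by norm_num) ENNReal.ofReal_ne_top),
          ENNReal.mul_rpow_of_nonneg _ _ (by norm_num : (0:ℝ) ≤ 2⁻¹), rpow_two_half]
    _ ≤ Kₑ * ((∫⁻ x, A x ^ (2:ℝ) ∂μI) ^ ((2:ℝ)⁻¹) + (∫⁻ x, B x ^ (2:ℝ) ∂μI) ^ ((2:ℝ)⁻¹)) := by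
        gcongr
        have := ENNReal.lintegral_Lp_add_le (μ := μI) hA.aemeasurable hB.aemeasurable
          (by norm_num : (1:ℝ) ≤ 2)
        simpa [one_div, Pi.add_apply] using this
    _ ≤ Kₑ * (B₀ * Nw + ENNReal.ofReal C₂ * Nw) := by gcongr
    _ = Kₑ * (B₀ + ENNReal.ofReal C₂) * Nw := by ring
    _ = ENNReal.ofReal K * (eLpNorm (Function.uncurry W) 2 (μI.prod μI) + ENNReal.ofReal C₂) *
        eLpNorm ((u : ℝ → ℝ) - (v : ℝ → ℝ)) 2 μI := by
        rw [hKe_def, hB₀_def, hNw_def, eLpNorm_two_eq]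
        rfl

end Kuramoto

/-- Theorem 2.1: under the kernel bounds, for every `g ∈ L²([0,1])` the IVP
for the continuum limit has a unique solution `u ∈ C¹(ℝ, L²([0,1]))`, which
depends continuously on the initial condition. -/
theorem CL_wellposedness
    (W : ℝ → ℝ → ℝ) (ω : ℝ → ℝ) (K C₁ C₂ : ℝ) (hK : 0 < K)
    (hWmeas : Measurable (Function.uncurry W))
    (hWnn : ∀ x y, 0 ≤ W x y)
    (hWL2 : MemLp (Function.uncurry W) 2 (μI.prod μI))
    (hC₁ : ∀ᵐ y ∂μI, ∫ x, W x y ∂μI ≤ C₁)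
    (hC₂ : ∀ᵐ x ∂μI, ∫ y, W x y ∂μI ≤ C₂)
    (hω : MemLp ω 2 μI) :
    (∀ g : Lp ℝ 2 μI, ∃! u : ℝ → Lp ℝ 2 μI,
      IsCLSolution W ω K u ∧ u 0 = g) ∧
    (∀ ε > (0 : ℝ), ∀ τ > (0 : ℝ), ∃ δ > (0 : ℝ),
      ∀ g g' : Lp ℝ 2 μI, ∀ u u' : ℝ → Lp ℝ 2 μI,
        IsCLSolution W ω K u → u 0 = g →
        IsCLSolution W ω K u' → u' 0 = g' →
        ‖g - g'‖ < δ → ∀ t ∈ Set.Icc (-τ) τ, ‖u t - u' t‖ < ε) := by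
  classical
  -- the vector field
  set F : Lp ℝ 2 μI → Lp ℝ 2 μI :=
    fun u => (memF W ω K C₂ hK hWmeas hWnn hWL2 hC₂ hω u).toLp (Fraw W ω K u) with hF_def
  have hFcoe : ∀ u, (F u : ℝ → ℝ) =ᵐ[μI] Fraw W ω K u := fun u => MemLp.coeFn_toLp _
  set Le : ℝ≥0∞ :=
    ENNReal.ofReal K * (eLpNorm (Function.uncurry W) 2 (μI.prod μI) + ENNReal.ofReal C₂)
    with hLe_def
  have hLe_top : Le ≠ ∞ := by
    rw [hLe_def]
    exact ENNReal.mul_ne_top ENNReal.ofReal_ne_top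
      (ENNReal.add_ne_top.mpr ⟨hWL2.2.ne, ENNReal.ofReal_ne_top⟩)
  set c : ℝ≥0 := Le.toNNReal with hc_def
  have hcLe : (c : ℝ≥0∞) = Le := ENNReal.coe_toNNReal hLe_top
  have hFlip : LipschitzWith c F := by
    intro u v
    rw [Lp.edist_def, Lp.edist_def, hcLe]
    have h1 : eLpNorm (⇑(F u) - ⇑(F v)) 2 μI = eLpNorm (Fraw W ω K u - Fraw W ω K v) 2 μI := by
      apply eLpNorm_congr_ae
      filter_upwards [hFcoe u, hFcoe v] with x h1 h2
      simp only [Pi.sub_apply, h1, h2]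
    rw [h1]
    exact lipF W ω K C₂ hK hWmeas hWnn hWL2 hC₂ u v
  set M : ℝ := (eLpNorm ω 2 μI + ENNReal.ofReal (K * C₂)).toReal with hM_def
  have hFbound : ∀ u, ‖F u‖ ≤ M := by
    intro u
    rw [Lp.norm_def]
    refine ENNReal.toReal_mono
      (ENNReal.add_ne_top.mpr ⟨hω.2.ne, ENNReal.ofReal_ne_top⟩) ?_
    calc eLpNorm (⇑(F u)) 2 μI = eLpNorm (Fraw W ω K u) 2 μI := eLpNorm_congr_ae (hFcoe u)
      _ ≤ _ := eLpNorm_F_le W ω K C₂ hK hWmeas hWnn hWL2 hC₂ hω u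
  have hchar : ∀ u : ℝ → Lp ℝ 2 μI, IsCLSolution W ω K u ↔
      (Continuous u ∧ ∀ t, HasDerivAt u (F (u t)) t) := by
    intro u
    constructor
    · rintro ⟨d, hcu, hcd, hprop⟩
      refine ⟨hcu, fun t => ?_⟩
      have hd : d t = F (u t) := by
        apply Lp.ext
        exact ((hprop t).2).trans (hFcoe (u t)).symm
      rw [← hd]
      exact (hprop t).1
    · rintro ⟨hcu, hder⟩
      exact ⟨fun t => F (u t), hcu, hFlip.continuous.comp hcu,
        fun t => ⟨hder t, hFcoe (u t)⟩⟩
  refine ⟨?_, ?_⟩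
  · intro g
    obtain ⟨u, hu0, hud⟩ := global_exists F c hFlip M hFbound g
    have hcu : Continuous u := by
      rw [continuous_iff_continuousAt]
      exact fun t => (hud t).continuousAt
    refine ⟨u, ⟨(hchar u).mpr ⟨hcu, hud⟩, hu0⟩, ?_⟩
    rintro u' ⟨hsol', h0'⟩
    obtain ⟨hcu', hud'⟩ := (hchar u').mp hsol'
    exact global_unique F c hFlip u' u hud' hud (by rw [h0', hu0])
  · intro ε hε τ hτ
    refine ⟨ε / (Real.exp (c * τ) + 1), by positivity, ?_⟩
    intro g g' u u' hsol h0 hsol' h0' hlt t ht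
    obtain ⟨hcu, hud⟩ := (hchar u).mp hsol
    obtain ⟨hcu', hud'⟩ := (hchar u').mp hsol'
    have hg := global_gronwall F c hFlip u u' hud hud' t
    rw [h0, h0'] at hg
    have habs : |t| ≤ τ := abs_le.mpr ⟨ht.1, ht.2⟩
    have hexp : Real.exp ((c : ℝ) * |t|) ≤ Real.exp ((c : ℝ) * τ) :=
      Real.exp_le_exp.mpr (mul_le_mul_of_nonneg_left habs c.coe_nonneg)
    calc ‖u t - u' t‖ = dist (u t) (u' t) := (dist_eq_norm _ _).symm
      _ ≤ dist g g' * Real.exp ((c : ℝ) * τ) :=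
          hg.trans (mul_le_mul_of_nonneg_left hexp dist_nonneg)
      _ < (ε / (Real.exp ((c : ℝ) * τ) + 1)) * Real.exp ((c : ℝ) * τ) := by
          refine mul_lt_mul_of_pos_right ?_ (Real.exp_pos _)
          rw [dist_eq_norm]
          exact hlt
      _ < ε := by
          rw [div_mul_eq_mul_div, div_lt_iff₀ (by positivity)]
          nlinarith [Real.exp_pos ((c : ℝ) * τ), hε]
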